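/- arXiv:2005.03432 — 8 statements merged into one kernel-verified Lean document; each statement's English description precedes it below -/
import Mathlib

section
/- Let β, d, κ > 0 and let L, A : ℝ → ℝ be differentiable, nonnegative, and bounded on [0,∞), satisfying A'(t) = β·L(t) − d·A(t)² and (L + A)'(t) ≤ −κ·A(t)² for all t ≥ 0. Then A(t) → 0 and L(t) → 0 as t → ∞. Consequently, any function A_p with 0 ≤ A_p(t) ≤ A(t) also satisfies A_p(t) → 0. -/
/-!
`V = L + A` is a Lyapunov function: it is nonincreasing and bounded below, hence convergent,
so its increments over windows of fixed length tend to `0`. Since `A' ≥ -d A²` is bounded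
below, every time `A` reaches a level `ε` it stays above `ε / 2` for a fixed time `δ`, during
which `V` drops by at least `κ (ε / 2)² δ`; hence `A → 0`. Then `A' = β L - o(1)`, and
`L' = (L + A)' - A' ≤ d A²` is bounded above: if `L` reached a level `ε` late, it would have been
above `ε / 2` for a time `δ` before, forcing `A` to grow by a fixed amount, contradicting `A → 0`.
-/

open Set Filter Topology

lemma AntitoneOn.exists_tendsto_atTop {α β : Type*} [Preorder α] [IsDirectedOrder α]
    [ConditionallyCompleteLinearOrder β] [TopologicalSpace β] [OrderTopology β]
    {f : α → β} {a : α} (hf : AntitoneOn f (Ici a)) (hb : BddBelow (f '' Ici a)) :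
    ∃ l, Tendsto f atTop (𝓝 l) := by
  rw [image_eq_range] at hb
  exact ⟨_, tendsto_comp_val_Ici_atTop.1 (tendsto_atTop_ciInf (antitoneOn_iff_antitone.1 hf) hb)⟩

lemma tendsto_of_eventually_le_of_eventually_lt {α β : Type*} [LinearOrder β]
    [TopologicalSpace β] [OrderTopology β] {l : Filter α} {f : α → β} {b : β}
    (hle : ∀ᶠ x in l, b ≤ f x) (hlt : ∀ c > b, ∀ᶠ x in l, f x < c) : Tendsto f l (𝓝 b) :=
  tendsto_order.2 ⟨fun _ hc => hle.mono fun _ hx => hc.trans_le hx, hlt⟩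

lemma image_sub_le_mul_sub_of_deriv_le_Icc {f : ℝ → ℝ} (hf : Differentiable ℝ f) {a b C : ℝ}
    (hab : a ≤ b) (h : ∀ x ∈ Icc a b, deriv f x ≤ C) : f b - f a ≤ C * (b - a) :=
  (convex_Icc a b).image_sub_le_mul_sub_of_deriv_le hf.continuous.continuousOn hf.differentiableOn
    (fun x hx => h x (interior_subset hx)) a (left_mem_Icc.2 hab) b (right_mem_Icc.2 hab) hab

lemma mul_sub_le_image_sub_of_le_deriv_Icc {f : ℝ → ℝ} (hf : Differentiable ℝ f) {a b C : ℝ}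
    (hab : a ≤ b) (h : ∀ x ∈ Icc a b, C ≤ deriv f x) : C * (b - a) ≤ f b - f a :=
  (convex_Icc a b).mul_sub_le_image_sub_of_le_deriv hf.continuous.continuousOn hf.differentiableOn
    (fun x hx => h x (interior_subset hx)) a (left_mem_Icc.2 hab) b (right_mem_Icc.2 hab) hab

theorem tendsto_zero_of_deriv_le_neg_mul_sq {V g : ℝ → ℝ} {κ C : ℝ} (hκ : 0 < κ) (hC : 0 < C)
    (hV : Differentiable ℝ V) (hg : Differentiable ℝ g) (hVbdd : BddBelow (V '' Ici 0))
    (hV' : ∀ t ≥ 0, deriv V t ≤ -κ * g t ^ 2) (hg0 : ∀ t ≥ 0, 0 ≤ g t)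
    (hg' : ∀ t ≥ 0, -C ≤ deriv g t) : Tendsto g atTop (𝓝 0) := by
  have hanti : AntitoneOn V (Ici 0) :=
    antitoneOn_of_deriv_nonpos (convex_Ici 0) hV.continuous.continuousOn hV.differentiableOn
      fun t ht => (hV' t (interior_subset ht)).trans (by nlinarith [sq_nonneg (g t)])
  obtain ⟨l, hl⟩ := hanti.exists_tendsto_atTop hVbdd
  refine tendsto_of_eventually_le_of_eventually_lt ((eventually_ge_atTop 0).mono hg0)
    fun ε hε => ?_
  set δ := ε / (2 * C)
  have hδ : 0 < δ := by positivity
  have hCδ : C * δ = ε / 2 := by simp only [δ]; field_simp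
  have hdrop : ∀ t ≥ 0, ε ≤ g t → V (t + δ) - V t ≤ -κ * (ε / 2) ^ 2 * δ := by
    intro t ht hgt
    have hwindow : ∀ s ∈ Icc t (t + δ), deriv V s ≤ -κ * (ε / 2) ^ 2 := by
      intro s hs
      have hgs : ε / 2 ≤ g s := by
        have := mul_sub_le_image_sub_of_le_deriv_Icc hg hs.1 fun u hu => hg' u (ht.trans hu.1)
        nlinarith [hs.2]
      calc deriv V s ≤ -κ * g s ^ 2 := hV' s (ht.trans hs.1)
        _ ≤ -κ * (ε / 2) ^ 2 := mul_le_mul_of_nonpos_left (by gcongr) (by linarith)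
    simpa using image_sub_le_mul_sub_of_deriv_le_Icc hV (le_add_of_nonneg_right hδ.le) hwindow
  have hincr : Tendsto (fun t => V (t + δ) - V t) atTop (𝓝 0) := by
    simpa using (hl.comp (tendsto_atTop_add_const_right _ δ tendsto_id)).sub hl
  have hc : -κ * (ε / 2) ^ 2 * δ < 0 := by
    have : 0 < κ * (ε / 2) ^ 2 * δ := by positivity
    linarith
  filter_upwards [hincr.eventually (lt_mem_nhds hc), eventually_ge_atTop 0] with t ht ht0
  by_contra! h
  linarith [hdrop t ht0 h]

theorem tendsto_zero_of_tendsto_mul_sub_deriv {f g : ℝ → ℝ} {β C : ℝ} (hβ : 0 < β) (hC : 0 < C)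
    (hf : Differentiable ℝ f) (hg : Differentiable ℝ g) (hf0 : ∀ t ≥ 0, 0 ≤ f t)
    (hf' : ∀ t ≥ 0, deriv f t ≤ C) (hg0 : Tendsto g atTop (𝓝 0))
    (hfg : Tendsto (fun t => β * f t - deriv g t) atTop (𝓝 0)) : Tendsto f atTop (𝓝 0) := by
  refine tendsto_of_eventually_le_of_eventually_lt ((eventually_ge_atTop 0).mono hf0)
    fun ε hε => ?_
  set δ := ε / (2 * C)
  have hδ : 0 < δ := by positivity
  have hCδ : C * δ = ε / 2 := by simp only [δ]; field_simp
  have hη : 0 < β * ε * δ / 8 := by positivity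
  obtain ⟨T, hT⟩ := eventually_atTop.1 <|
    (hg0.eventually (Ioo_mem_nhds (neg_lt_zero.2 hη) hη)).and <|
      (hfg.eventually (gt_mem_nhds (by positivity : 0 < β * ε / 4))).and (eventually_ge_atTop 0)
  filter_upwards [eventually_ge_atTop (T + δ)] with t ht
  by_contra! hft
  have hwindow : ∀ s ∈ Icc (t - δ) t, β * ε / 4 ≤ deriv g s := by
    intro s hs
    obtain ⟨-, hfgs, hs0⟩ := hT s (by linarith [hs.1])
    have hfs : ε / 2 ≤ f s := by
      have := image_sub_le_mul_sub_of_deriv_le_Icc hf hs.2 fun u hu => hf' u (hs0.trans hu.1)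
      nlinarith [hs.1]
    nlinarith [mul_le_mul_of_nonneg_left hfs hβ.le]
  have hgrow := mul_sub_le_image_sub_of_le_deriv_Icc hg (sub_le_self t hδ.le) hwindow
  have hgt := (hT t (by linarith)).1
  have hgtδ := (hT (t - δ) (by linarith)).1
  rw [sub_sub_cancel] at hgrow
  linarith [hgt.2, hgtδ.1]

theorem stmt_6_general (β d κ : ℝ) (hβ : 0 < β) (hd : 0 < d) (hκ : 0 < κ)
    (L A : ℝ → ℝ) (hL : Differentiable ℝ L) (hA : Differentiable ℝ A)
    (hLnonneg : ∀ t : ℝ, 0 ≤ t → 0 ≤ L t) (hAnonneg : ∀ t : ℝ, 0 ≤ t → 0 ≤ A t)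
    (hAbdd : ∃ M : ℝ, ∀ t : ℝ, 0 ≤ t → A t ≤ M)
    (hAeq : ∀ t : ℝ, 0 ≤ t → deriv A t = β * L t - d * (A t) ^ 2)
    (hLA : ∀ t : ℝ, 0 ≤ t → deriv (fun s => L s + A s) t ≤ -κ * (A t) ^ 2) :
    Filter.Tendsto A Filter.atTop (nhds 0) ∧
    Filter.Tendsto L Filter.atTop (nhds 0) ∧
    (∀ Ap : ℝ → ℝ, (∀ t : ℝ, 0 ≤ t → 0 ≤ Ap t ∧ Ap t ≤ A t) →
      Filter.Tendsto Ap Filter.atTop (nhds 0)) := by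
  obtain ⟨M, hM⟩ := hAbdd
  have hA_sq (t : ℝ) (ht : 0 ≤ t) : A t ^ 2 ≤ M ^ 2 := by gcongr; exacts [hAnonneg t ht, hM t ht]
  set C := d * M ^ 2 + 1
  have hC : 0 < C := by positivity
  have hA' (t : ℝ) (ht : 0 ≤ t) : -C ≤ deriv A t := by
    rw [hAeq t ht]; nlinarith [hA_sq t ht, hLnonneg t ht]
  have hL' (t : ℝ) (ht : 0 ≤ t) : deriv L t ≤ C := by
    have := hLA t ht
    rw [deriv_fun_add (hL t) (hA t), hAeq t ht] at this
    nlinarith [hA_sq t ht, hLnonneg t ht, sq_nonneg (A t)]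
  have hV_bdd : BddBelow ((fun s => L s + A s) '' Ici 0) := by
    refine ⟨0, ?_⟩
    rintro _ ⟨t, ht, rfl⟩
    exact add_nonneg (hLnonneg t ht) (hAnonneg t ht)
  have hA0 : Tendsto A atTop (𝓝 0) :=
    tendsto_zero_of_deriv_le_neg_mul_sq hκ hC (hL.add hA) hA hV_bdd hLA hAnonneg hA'
  have hdA_sq : Tendsto (fun t => β * L t - deriv A t) atTop (𝓝 0) := by
    refine (by simpa using (hA0.pow 2).const_mul d : Tendsto (fun t => d * A t ^ 2) _ _).congr' ?_
    filter_upwards [eventually_ge_atTop 0] with t ht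
    rw [hAeq t ht]; ring
  refine ⟨hA0, tendsto_zero_of_tendsto_mul_sub_deriv hβ hC hL hA hLnonneg hL' hA0 hdA_sq,
    fun Ap hAp => squeeze_zero' ?_ ?_ hA0⟩
  all_goals filter_upwards [eventually_ge_atTop 0] with t ht
  exacts [(hAp t ht).1, (hAp t ht).2]

/-- Global extinction core: if `L, A` are nonnegative, bounded, differentiable,
`A' = βL - dA²` and `(L+A)' ≤ -κ A²`, then `A → 0`, `L → 0`, and any function
squeezed between `0` and `A` also tends to `0`. -/
theorem stmt_6 (β d κ : ℝ) (hβ : 0 < β) (hd : 0 < d) (hκ : 0 < κ)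
    (L A : ℝ → ℝ) (hL : Differentiable ℝ L) (hA : Differentiable ℝ A)
    (hLnonneg : ∀ t : ℝ, 0 ≤ t → 0 ≤ L t) (hAnonneg : ∀ t : ℝ, 0 ≤ t → 0 ≤ A t)
    (hLbdd : ∃ M : ℝ, ∀ t : ℝ, 0 ≤ t → L t ≤ M)
    (hAbdd : ∃ M : ℝ, ∀ t : ℝ, 0 ≤ t → A t ≤ M)
    (hAeq : ∀ t : ℝ, 0 ≤ t → deriv A t = β * L t - d * (A t) ^ 2)
    (hLA : ∀ t : ℝ, 0 ≤ t → deriv (fun s => L s + A s) t ≤ -κ * (A t) ^ 2) :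
    Filter.Tendsto A Filter.atTop (nhds 0) ∧
    Filter.Tendsto L Filter.atTop (nhds 0) ∧
    (∀ Ap : ℝ → ℝ, (∀ t : ℝ, 0 ≤ t → 0 ≤ Ap t ∧ Ap t ≤ A t) →
      Filter.Tendsto Ap Filter.atTop (nhds 0)) :=
  stmt_6_general β d κ hβ hd hκ L A hL hA hLnonneg hAnonneg hAbdd hAeq hLA
end

section
/- Let a, b, d, β, γ, θ₀ > 0 and α₁ ∈ (0,1), and let L, A, A_p be positive reals with A_p < A. Suppose the three equilibrium equations hold: α₁·γ·(A_p/(A − A_p) − θ₀)·aA²/(b + aA²) = β·L, β·L = d·A², and α₁·β·L + α₁·(A − A_p)·L = d·A_p·A. Then A satisfies the quadratic equation a·d·β·(1−α₁)·A² − a·α₁²·γ·A + β·((1−α₁)·(b·d + a·α₁·γ·θ₀) − a·α₁²·γ) = 0. -/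
/-- At an interior equilibrium of the colony model, the total worker
population `A` satisfies the quadratic equation (root-A). -/
theorem stmt_8 (a b d β γ θ₀ α₁ L A Ap : ℝ) (ha : 0 < a) (hb : 0 < b)
    (hd : 0 < d) (hβ : 0 < β) (hγ : 0 < γ) (hθ₀ : 0 < θ₀)
    (hα₁ : α₁ ∈ Set.Ioo (0:ℝ) 1) (hL : 0 < L) (hA : 0 < A) (hAp : 0 < Ap)
    (hApA : Ap < A)
    (heq0 : α₁ * γ * (Ap / (A - Ap) - θ₀) * (a * A ^ 2 / (b + a * A ^ 2)) = β * L)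
    (heq1 : β * L = d * A ^ 2)
    (heq2 : α₁ * β * L + α₁ * (A - Ap) * L = d * Ap * A) :
    a * d * β * (1 - α₁) * A ^ 2 - a * α₁ ^ 2 * γ * A +
      β * ((1 - α₁) * (b * d + a * α₁ * γ * θ₀) - a * α₁ ^ 2 * γ) = 0 := by
  have hsub : (0:ℝ) < A - Ap := by linarith
  have hden : (0:ℝ) < b + a * A ^ 2 := by positivity
  have hP : α₁ * β * A + α₁ * (A - Ap) * A = β * Ap := by
    have hdA : (0:ℝ) < d * A := by positivity
    have key : d * A * (α₁ * β * A + α₁ * (A - Ap) * A - β * Ap) = 0 := by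
      linear_combination β * heq2 - α₁ * (β + A - Ap) * heq1
    have := (mul_eq_zero.mp key).resolve_left hdA.ne'
    linarith
  have h3 : α₁ * γ * (Ap - θ₀ * (A - Ap)) * (a * A ^ 2) =
      d * A ^ 2 * ((A - Ap) * (b + a * A ^ 2)) := by
    have e : Ap / (A - Ap) - θ₀ = (Ap - θ₀ * (A - Ap)) / (A - Ap) := by
      field_simp
    rw [e] at heq0
    field_simp at heq0
    linear_combination heq0 + (A - Ap) * (b + a * A ^ 2) * heq1
  have key : A ^ 3 * (a * d * β * (1 - α₁) * A ^ 2 - a * α₁ ^ 2 * γ * A +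
      β * ((1 - α₁) * (b * d + a * α₁ * γ * θ₀) - a * α₁ ^ 2 * γ)) = 0 := by
    linear_combination (-(β + α₁ * A)) * h3 -
      (a * α₁ * γ * A ^ 2 * (1 + θ₀) + d * A ^ 2 * (b + a * A ^ 2)) * hP
  have hA3 : (A : ℝ) ^ 3 ≠ 0 := by positivity
  rcases mul_eq_zero.mp key with h | h
  · exact absurd h hA3
  · exact h
end

section
/- Let β > 0, α₁ ∈ (0,1), A > 0, and set A_p = α₁·A·(β + A)/(β + α₁·A). Then A_p < A and the protein-to-carbohydrate ratio satisfies A_p/(A − A_p) = α₁·(A + β)/(β·(1 − α₁)). Moreover this ratio is a strictly increasing function of A. -/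
/-- For `A_p = α₁·A·(β+A)/(β+α₁·A)` one has `A_p < A` and the nutrient ratio
`A_p/(A - A_p) = α₁(A+β)/(β(1-α₁))`, which is strictly increasing in `A`. -/
theorem stmt_9 (β α₁ : ℝ) (hβ : 0 < β) (hα₁ : α₁ ∈ Set.Ioo (0:ℝ) 1) :
    (∀ A : ℝ, 0 < A →
      α₁ * A * (β + A) / (β + α₁ * A) < A ∧
      (α₁ * A * (β + A) / (β + α₁ * A)) /
          (A - α₁ * A * (β + A) / (β + α₁ * A)) =
        α₁ * (A + β) / (β * (1 - α₁))) ∧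
    StrictMonoOn (fun A : ℝ => α₁ * (A + β) / (β * (1 - α₁))) (Set.Ioi 0) := by
  obtain ⟨hα0, hα1⟩ := hα₁
  constructor
  · intro A hA
    have hd : 0 < β + α₁ * A := by positivity
    constructor
    · rw [div_lt_iff₀ hd]
      nlinarith [mul_pos (mul_pos hA hβ) (show (0:ℝ) < 1 - α₁ by linarith)]
    · have h1 : A - α₁ * A * (β + A) / (β + α₁ * A)
          = β * (1 - α₁) * A / (β + α₁ * A) := by
        field_simp
        ring
      rw [h1]
      have h2 : β * (1 - α₁) ≠ 0 := by nlinarith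
      field_simp
      ring
  · intro x hx y hy hxy
    have h1 : (0:ℝ) < β * (1 - α₁) := by nlinarith
    simp only
    rw [div_lt_div_iff₀ h1 h1]
    nlinarith [mul_pos (mul_pos hα0 h1) (sub_pos.mpr hxy)]
end

section
/- Let a, b, d, β, γ, θ₀ > 0, α₁ ∈ (0,1), define â* = 4bd²β²(1−α₁)² / (α₁⁴γ² + 4dβ²α₁γ(1−α₁)(α₁ − (1−α₁)θ₀)), and suppose θ₀ < (α₁³γ + 4dα₁β²(1−α₁))/(4dβ²(1−α₁)²) and 0 < a < â*. Then the quadratic a·d·β·(1−α₁)·A² − a·α₁²·γ·A + β·((1−α₁)·(b·d + a·α₁·γ·θ₀) − a·α₁²·γ) = 0 has no real root; in particular the colony model has no interior equilibrium, and the extinction equilibrium E₀ = (0,0,0) is the only equilibrium. -/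
/-- Case (1) of the Existence of Equilibria theorem: for `0 < a < â*` the
equilibrium quadratic has no real root; in particular the colony model has no
interior equilibrium, so the extinction equilibrium is the only one. -/
theorem stmt_10 (a b d β γ θ₀ α₁ : ℝ) (ha : 0 < a) (hb : 0 < b) (hd : 0 < d)
    (hβ : 0 < β) (hγ : 0 < γ) (hθ₀ : 0 < θ₀) (hα₁ : α₁ ∈ Set.Ioo (0:ℝ) 1)
    (hθ₀lt : θ₀ < (α₁ ^ 3 * γ + 4 * d * α₁ * β ^ 2 * (1 - α₁)) /
      (4 * d * β ^ 2 * (1 - α₁) ^ 2))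
    (halt : a < 4 * b * d ^ 2 * β ^ 2 * (1 - α₁) ^ 2 /
      (α₁ ^ 4 * γ ^ 2 +
        4 * d * β ^ 2 * α₁ * γ * (1 - α₁) * (α₁ - (1 - α₁) * θ₀))) :
    (∀ A : ℝ,
      a * d * β * (1 - α₁) * A ^ 2 - a * α₁ ^ 2 * γ * A +
        β * ((1 - α₁) * (b * d + a * α₁ * γ * θ₀) - a * α₁ ^ 2 * γ) ≠ 0) ∧
    ¬∃ L A Ap : ℝ, 0 < L ∧ 0 < A ∧ 0 < Ap ∧ Ap < A ∧
      α₁ * γ * (Ap / (A - Ap) - θ₀) * (a * A ^ 2 / (b + a * A ^ 2)) = β * L ∧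
      β * L = d * A ^ 2 ∧
      α₁ * β * L + α₁ * (A - Ap) * L = d * Ap * A := by
  obtain ⟨hα0, hα1⟩ := hα₁
  have h1α : 0 < 1 - α₁ := by linarith
  -- θ₀ bound cleared of division
  have hθ' : θ₀ * (4 * d * β ^ 2 * (1 - α₁) ^ 2) <
      α₁ ^ 3 * γ + 4 * d * α₁ * β ^ 2 * (1 - α₁) := by
    have hM : 0 < 4 * d * β ^ 2 * (1 - α₁) ^ 2 := by positivity
    exact (lt_div_iff₀ hM).mp hθ₀lt
  have hD : 0 < α₁ ^ 4 * γ ^ 2 +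
      4 * d * β ^ 2 * α₁ * γ * (1 - α₁) * (α₁ - (1 - α₁) * θ₀) := by
    nlinarith [mul_pos (mul_pos hα0 hγ) h1α]
  have haD : a * (α₁ ^ 4 * γ ^ 2 +
      4 * d * β ^ 2 * α₁ * γ * (1 - α₁) * (α₁ - (1 - α₁) * θ₀)) <
      4 * b * d ^ 2 * β ^ 2 * (1 - α₁) ^ 2 := (lt_div_iff₀ hD).mp halt
  -- discriminant negative
  have hdisc : (a * α₁ ^ 2 * γ) ^ 2 -
      4 * (a * d * β * (1 - α₁)) *
        (β * ((1 - α₁) * (b * d + a * α₁ * γ * θ₀) - a * α₁ ^ 2 * γ)) < 0 := by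
    nlinarith [mul_lt_mul_of_pos_left haD ha]
  have hmain : ∀ A : ℝ,
      a * d * β * (1 - α₁) * A ^ 2 - a * α₁ ^ 2 * γ * A +
        β * ((1 - α₁) * (b * d + a * α₁ * γ * θ₀) - a * α₁ ^ 2 * γ) ≠ 0 := by
    intro A hq
    nlinarith [sq_nonneg (2 * (a * d * β * (1 - α₁)) * A - a * α₁ ^ 2 * γ),
      mul_pos (mul_pos (mul_pos ha hd) hβ) h1α]
  refine ⟨hmain, ?_⟩
  rintro ⟨L, A, Ap, hL, hA, hAp, hApA, h1, h2, h3⟩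
  have hAAp : 0 < A - Ap := by linarith
  have hden : 0 < b + a * A ^ 2 := by positivity
  -- clear denominators in h1
  have h1' : α₁ * γ * (Ap - θ₀ * (A - Ap)) * (a * A ^ 2) =
      β * L * ((A - Ap) * (b + a * A ^ 2)) := by
    field_simp at h1
    linear_combination h1
  -- from h2 and h3 (times β): α₁ * d * A^2 * (β + A - Ap) = d * Ap * A * β
  have h3' : α₁ * d * A ^ 2 * (β + (A - Ap)) = d * Ap * A * β := by
    linear_combination β * h3 - (α₁ * β + α₁ * (A - Ap)) * h2
  -- derive the quadratic equation at A
  apply hmain A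
  have hAne : A ≠ 0 := ne_of_gt hA
  have hden2 : (0:ℝ) < β + α₁ * A := by positivity
  -- E3 : Ap * (β + α₁*A) = α₁ * A * (β + A)
  have hE3 : Ap * (β + α₁ * A) = α₁ * A * (β + A) := by
    have hdA : d * A ≠ 0 := by positivity
    have : d * A * (Ap * (β + α₁ * A)) = d * A * (α₁ * A * (β + A)) := by
      linear_combination -h3'
    exact mul_left_cancel₀ hdA this
  -- E1 : α₁ * γ * (Ap - θ₀*(A-Ap)) * a = d * (A - Ap) * (b + a*A^2)
  have hE1 : α₁ * γ * (Ap - θ₀ * (A - Ap)) * a = d * (A - Ap) * (b + a * A ^ 2) := by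
    have hA2 : A ^ 2 ≠ 0 := pow_ne_zero _ hAne
    have : (α₁ * γ * (Ap - θ₀ * (A - Ap)) * a) * A ^ 2 =
        (d * (A - Ap) * (b + a * A ^ 2)) * A ^ 2 := by
      linear_combination h1' + (A - Ap) * (b + a * A ^ 2) * h2
    exact mul_right_cancel₀ hA2 this
  -- combine
  have hc : (a * d * β * (1 - α₁) * A ^ 2 - a * α₁ ^ 2 * γ * A +
      β * ((1 - α₁) * (b * d + a * α₁ * γ * θ₀) - a * α₁ ^ 2 * γ)) *
      ((β + α₁ * A) * A) = 0 := by
    linear_combination (-(β + α₁ * A) ^ 2) * hE1 +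
      (β + α₁ * A) * (b * d + a * γ * α₁ * (1 + θ₀) + a * d * A ^ 2) * hE3
  have hne : (β + α₁ * A) * A ≠ 0 := by positivity
  exact (mul_eq_zero.mp hc).resolve_right hne
end

section
/- Let a, b, d, β, γ, θ₀ > 0, α₁ ∈ (0,1), define â* = 4bd²β²(1−α₁)² / (α₁⁴γ² + 4dβ²α₁γ(1−α₁)(α₁ − (1−α₁)θ₀)), and suppose θ₀ < (α₁³γ + 4dα₁β²(1−α₁))/(4dβ²(1−α₁)²) and a = â*. Then the quadratic a·d·β·(1−α₁)·A² − a·α₁²·γ·A + β·((1−α₁)·(b·d + a·α₁·γ·θ₀) − a·α₁²·γ) = 0 has exactly one real root, the double root A* = α₁²γ/(2βd(1−α₁)), which is positive. -/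
/-- Case (2) of the Existence of Equilibria theorem: at `a = â*` the
equilibrium quadratic has exactly one real root, the positive double root
`A* = α₁²γ/(2βd(1-α₁))`. -/
theorem stmt_11 (a b d β γ θ₀ α₁ : ℝ) (ha : 0 < a) (hb : 0 < b) (hd : 0 < d)
    (hβ : 0 < β) (hγ : 0 < γ) (hθ₀ : 0 < θ₀) (hα₁ : α₁ ∈ Set.Ioo (0:ℝ) 1)
    (hθ₀lt : θ₀ < (α₁ ^ 3 * γ + 4 * d * α₁ * β ^ 2 * (1 - α₁)) /
      (4 * d * β ^ 2 * (1 - α₁) ^ 2))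
    (haeq : a = 4 * b * d ^ 2 * β ^ 2 * (1 - α₁) ^ 2 /
      (α₁ ^ 4 * γ ^ 2 +
        4 * d * β ^ 2 * α₁ * γ * (1 - α₁) * (α₁ - (1 - α₁) * θ₀))) :
    (∀ A : ℝ,
      (a * d * β * (1 - α₁) * A ^ 2 - a * α₁ ^ 2 * γ * A +
        β * ((1 - α₁) * (b * d + a * α₁ * γ * θ₀) - a * α₁ ^ 2 * γ) = 0) ↔
      A = α₁ ^ 2 * γ / (2 * β * d * (1 - α₁))) ∧
    0 < α₁ ^ 2 * γ / (2 * β * d * (1 - α₁)) := by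
  obtain ⟨hα0, hα1⟩ := hα₁
  have h1 : 0 < 1 - α₁ := by linarith
  have hden : 0 < 4 * d * β ^ 2 * (1 - α₁) ^ 2 := by positivity
  have hθ' : θ₀ * (4 * d * β ^ 2 * (1 - α₁) ^ 2) <
      α₁ ^ 3 * γ + 4 * d * α₁ * β ^ 2 * (1 - α₁) := by
    rwa [← lt_div_iff₀ hden]
  have hD : 0 < α₁ ^ 4 * γ ^ 2 +
      4 * d * β ^ 2 * α₁ * γ * (1 - α₁) * (α₁ - (1 - α₁) * θ₀) := by
    nlinarith [mul_pos (mul_pos hα0 hγ) h1, mul_pos hα0 hγ]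
  have key : a * (α₁ ^ 4 * γ ^ 2 +
      4 * d * β ^ 2 * α₁ * γ * (1 - α₁) * (α₁ - (1 - α₁) * θ₀)) =
      4 * b * d ^ 2 * β ^ 2 * (1 - α₁) ^ 2 := by
    rw [haeq, div_mul_cancel₀]
    exact ne_of_gt hD
  have hc2 : 0 < a * d * β * (1 - α₁) := by positivity
  have hAstar : 0 < α₁ ^ 2 * γ / (2 * β * d * (1 - α₁)) := by positivity
  have hdenne : (2 * β * d * (1 - α₁)) ≠ 0 := by positivity
  refine ⟨fun A => ?_, hAstar⟩
  have hid : a * d * β * (1 - α₁) *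
      (A - α₁ ^ 2 * γ / (2 * β * d * (1 - α₁))) ^ 2 =
      a * d * β * (1 - α₁) * A ^ 2 - a * α₁ ^ 2 * γ * A +
        β * ((1 - α₁) * (b * d + a * α₁ * γ * θ₀) - a * α₁ ^ 2 * γ) := by
    field_simp
    ring_nf
    nlinarith [key, sq_nonneg A]
  constructor
  · intro h
    have h2 : (A - α₁ ^ 2 * γ / (2 * β * d * (1 - α₁))) ^ 2 = 0 := by
      have := hid.trans h
      exact (mul_eq_zero.mp this).resolve_left (ne_of_gt hc2)
    have := pow_eq_zero_iff (n := 2) (by norm_num) |>.mp h2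
    linarith
  · intro h
    rw [← hid, h]
    simp
end

section
/- Let a, b, d, β, γ, θ₀ > 0, α₁ ∈ (0,1), and suppose θ₀ < α₁/(1−α₁) and a > bd(1−α₁)/(α₁γ(α₁ − (1−α₁)θ₀)). Then the quadratic a·d·β·(1−α₁)·A² − a·α₁²·γ·A + β·((1−α₁)·(b·d + a·α₁·γ·θ₀) − a·α₁²·γ) = 0 has exactly one positive real root, namely A₂ = (aα₁²γ + √Δ)/(2aβd(1−α₁)) where Δ = a·(aα₁⁴γ² − 4dβ²((1−α₁)²(bd + aα₁γθ₀) − aα₁²γ(1−α₁))). -/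
/-- Case (3) of the Existence of Equilibria theorem: for
`a > bd(1-α₁)/(α₁γ(α₁-(1-α₁)θ₀))` and `θ₀ < α₁/(1-α₁)` the equilibrium
quadratic has exactly one positive real root `A₂`. -/
theorem stmt_12 (a b d β γ θ₀ α₁ : ℝ) (ha : 0 < a) (hb : 0 < b) (hd : 0 < d)
    (hβ : 0 < β) (hγ : 0 < γ) (hθ₀ : 0 < θ₀) (hα₁ : α₁ ∈ Set.Ioo (0:ℝ) 1)
    (hθ₀lt : θ₀ < α₁ / (1 - α₁))
    (halt : a > b * d * (1 - α₁) / (α₁ * γ * (α₁ - (1 - α₁) * θ₀))) :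
    let Δ := a * (a * α₁ ^ 4 * γ ^ 2 -
      4 * d * β ^ 2 * ((1 - α₁) ^ 2 * (b * d + a * α₁ * γ * θ₀) -
        a * α₁ ^ 2 * γ * (1 - α₁)))
    let A₂ := (a * α₁ ^ 2 * γ + Real.sqrt Δ) / (2 * a * β * d * (1 - α₁))
    0 < A₂ ∧
    (a * d * β * (1 - α₁) * A₂ ^ 2 - a * α₁ ^ 2 * γ * A₂ +
      β * ((1 - α₁) * (b * d + a * α₁ * γ * θ₀) - a * α₁ ^ 2 * γ) = 0) ∧
    ∀ A : ℝ, 0 < A →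
      a * d * β * (1 - α₁) * A ^ 2 - a * α₁ ^ 2 * γ * A +
        β * ((1 - α₁) * (b * d + a * α₁ * γ * θ₀) - a * α₁ ^ 2 * γ) = 0 →
      A = A₂ := by
  obtain ⟨hα0, hα1⟩ := hα₁
  have h1α : 0 < 1 - α₁ := by linarith
  have hnum : θ₀ * (1 - α₁) < α₁ := by
    have := (lt_div_iff₀ h1α).mp hθ₀lt
    linarith
  have hden : 0 < α₁ * γ * (α₁ - (1 - α₁) * θ₀) := by
    have : 0 < α₁ - (1 - α₁) * θ₀ := by nlinarith
    positivity
  have hkey : b * d * (1 - α₁) < a * (α₁ * γ * (α₁ - (1 - α₁) * θ₀)) := by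
    rw [gt_iff_lt, div_lt_iff₀ hden] at halt
    linarith
  -- constant term is negative
  have hc0 : (1 - α₁) * (b * d + a * α₁ * γ * θ₀) - a * α₁ ^ 2 * γ < 0 := by
    nlinarith
  intro Δ A₂
  have hΔdef : Δ = a * (a * α₁ ^ 4 * γ ^ 2 -
      4 * d * β ^ 2 * ((1 - α₁) ^ 2 * (b * d + a * α₁ * γ * θ₀) -
        a * α₁ ^ 2 * γ * (1 - α₁))) := rfl
  set m := a * α₁ ^ 2 * γ with hm
  have hmpos : 0 < m := by positivity
  have hΔgt : m ^ 2 < Δ := by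
    rw [hΔdef, hm]
    have h2 : 0 < a * d * β ^ 2 * (1 - α₁) := by positivity
    nlinarith [mul_pos h2 (neg_pos.mpr hc0)]
  have hΔpos : 0 < Δ := lt_trans (by positivity) hΔgt
  set s := Real.sqrt Δ with hsdef
  have hs2 : s ^ 2 = a * (a * α₁ ^ 4 * γ ^ 2 -
      4 * d * β ^ 2 * ((1 - α₁) ^ 2 * (b * d + a * α₁ * γ * θ₀) -
        a * α₁ ^ 2 * γ * (1 - α₁))) := by
    rw [hsdef, Real.sq_sqrt hΔpos.le, hΔdef]
  have hsm : m < s := by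
    have h1 : m ^ 2 < s ^ 2 := by rw [hsdef, Real.sq_sqrt hΔpos.le]; exact hΔgt
    nlinarith [Real.sqrt_nonneg Δ, hsdef ▸ Real.sqrt_nonneg Δ]
  have hspos : 0 < s := lt_trans hmpos hsm
  have hc2 : 0 < 2 * a * β * d * (1 - α₁) := by positivity
  have hA2 : A₂ = (m + s) / (2 * a * β * d * (1 - α₁)) := rfl
  have hA2v : A₂ * (2 * a * β * d * (1 - α₁)) = m + s := by
    rw [hA2, div_mul_cancel₀]
    exact hc2.ne'
  have hroot2 : a * d * β * (1 - α₁) * A₂ ^ 2 - m * A₂ +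
      β * ((1 - α₁) * (b * d + a * α₁ * γ * θ₀) - m) = 0 := by
    have hscaled : (4 * (a * d * β * (1 - α₁))) * (a * d * β * (1 - α₁) * A₂ ^ 2 - m * A₂ +
        β * ((1 - α₁) * (b * d + a * α₁ * γ * θ₀) - m)) = 0 := by
      linear_combination (2 * (a * d * β * (1 - α₁)) * A₂ + s - m) * hA2v + hs2
    have hne : (4 * (a * d * β * (1 - α₁))) ≠ 0 := by positivity
    exact (mul_eq_zero.mp hscaled).resolve_left hne
  refine ⟨?_, ?_, ?_⟩
  · rw [hA2]
    exact div_pos (by linarith) hc2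
  · exact hroot2
  · intro A hApos hAroot
    have hfac : (A - A₂) * (a * d * β * (1 - α₁) * (A + A₂) - m) = 0 := by
      linear_combination hAroot - hroot2
    rcases mul_eq_zero.mp hfac with h | h
    · linarith [sub_eq_zero.mp h]
    · exfalso
      have hsum : a * d * β * (1 - α₁) * (A + A₂) = m := by linarith
      have hAval : A * (2 * a * β * d * (1 - α₁)) = m - s := by
        linear_combination 2 * hsum - hA2v
      linarith [mul_pos hApos hc2]
end

section
/- Let a, b, d, β, γ, θ₀ > 0, α₁ ∈ (0,1), define â* = 4bd²β²(1−α₁)² / (α₁⁴γ² + 4dβ²α₁γ(1−α₁)(α₁ − (1−α₁)θ₀)), and suppose θ₀ < α₁/(1−α₁) and â* < a < bd(1−α₁)/(α₁γ(α₁ − (1−α₁)θ₀)). Then the quadratic a·d·β·(1−α₁)·A² − a·α₁²·γ·A + β·((1−α₁)·(b·d + a·α₁·γ·θ₀) − a·α₁²·γ) = 0 has exactly two real roots A₁ = (aα₁²γ − √Δ)/(2aβd(1−α₁)) and A₂ = (aα₁²γ + √Δ)/(2aβd(1−α₁)), where Δ = a·(aα₁⁴γ² − 4dβ²((1−α₁)²(bd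 + aα₁γθ₀) − aα₁²γ(1−α₁))), and they satisfy 0 < A₁ < A₂. -/
/-!
The equilibrium quadratic `p A² - q A + r` has `p, q > 0`. The upper bound on `a` is exactly
`r > 0`, and the lower bound `â* < a` is exactly `q² - 4 p r > 0`. Then
`0 < √(q² - 4 p r) < q`, so the roots `(q ± √(q² - 4 p r)) / 2p` are distinct and positive.
-/

open Real

section Quadratic

variable {p q r : ℝ}

theorem quadratic_eq_zero_iff_of_discrim_nonneg (hp : p ≠ 0) (hD : 0 ≤ q ^ 2 - 4 * p * r)
    (x : ℝ) :
    p * x ^ 2 - q * x + r = 0 ↔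
      x = (q - √(q ^ 2 - 4 * p * r)) / (2 * p) ∨ x = (q + √(q ^ 2 - 4 * p * r)) / (2 * p) := by
  have hdiscrim : discrim p (-q) r = √(q ^ 2 - 4 * p * r) * √(q ^ 2 - 4 * p * r) := by
    rw [mul_self_sqrt hD, discrim, neg_sq]
  rw [or_comm]
  convert quadratic_eq_zero_iff hp hdiscrim x using 3 <;> ring

theorem sqrt_discrim_lt (hp : 0 < p) (hq : 0 < q) (hr : 0 < r) :
    √(q ^ 2 - 4 * p * r) < q := by
  rw [sqrt_lt' hq]
  nlinarith [mul_pos hp hr]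

theorem quadratic_roots_pos (hp : 0 < p) (hq : 0 < q) (hr : 0 < r)
    (hD : 0 < q ^ 2 - 4 * p * r) :
    0 < (q - √(q ^ 2 - 4 * p * r)) / (2 * p) ∧
      (q - √(q ^ 2 - 4 * p * r)) / (2 * p) < (q + √(q ^ 2 - 4 * p * r)) / (2 * p) := by
  have hsqrt : 0 < √(q ^ 2 - 4 * p * r) := sqrt_pos.mpr hD
  have h2p : 0 < 2 * p := by positivity
  exact ⟨div_pos (sub_pos.mpr (sqrt_discrim_lt hp hq hr)) h2p,
    div_lt_div_of_pos_right (by linarith) h2p⟩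

end Quadratic

section Colony

variable {a b d β γ θ₀ α₁ : ℝ}

theorem colony_threshold_gap_pos (hα₁ : α₁ < 1) (hθ₀lt : θ₀ < α₁ / (1 - α₁)) :
    0 < α₁ - (1 - α₁) * θ₀ := by
  rw [lt_div_iff₀ (sub_pos.mpr hα₁)] at hθ₀lt
  linarith

theorem colony_constant_term_pos (hγ : 0 < γ) (hα₁ : 0 < α₁)
    (hgap : 0 < α₁ - (1 - α₁) * θ₀)
    (hahigh : a < b * d * (1 - α₁) / (α₁ * γ * (α₁ - (1 - α₁) * θ₀))) :
    0 < (1 - α₁) * (b * d + a * α₁ * γ * θ₀) - a * α₁ ^ 2 * γ := by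
  rw [lt_div_iff₀ (by positivity)] at hahigh
  linarith

theorem colony_discrim_pos (ha : 0 < a) (hd : 0 < d) (hγ : 0 < γ) (hα₀ : 0 < α₁)
    (hα₁ : α₁ < 1) (hgap : 0 < α₁ - (1 - α₁) * θ₀)
    (halow : 4 * b * d ^ 2 * β ^ 2 * (1 - α₁) ^ 2 /
      (α₁ ^ 4 * γ ^ 2 +
        4 * d * β ^ 2 * α₁ * γ * (1 - α₁) * (α₁ - (1 - α₁) * θ₀)) < a) :
    0 < a * (a * α₁ ^ 4 * γ ^ 2 -
      4 * d * β ^ 2 * ((1 - α₁) ^ 2 * (b * d + a * α₁ * γ * θ₀) -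
        a * α₁ ^ 2 * γ * (1 - α₁))) := by
  have h1α : 0 < 1 - α₁ := sub_pos.mpr hα₁
  rw [div_lt_iff₀ (by positivity)] at halow
  have hsplit : a * α₁ ^ 4 * γ ^ 2 -
      4 * d * β ^ 2 * ((1 - α₁) ^ 2 * (b * d + a * α₁ * γ * θ₀) - a * α₁ ^ 2 * γ * (1 - α₁)) =
      a * (α₁ ^ 4 * γ ^ 2 + 4 * d * β ^ 2 * α₁ * γ * (1 - α₁) * (α₁ - (1 - α₁) * θ₀)) -
      4 * b * d ^ 2 * β ^ 2 * (1 - α₁) ^ 2 := by ring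
  rw [hsplit]
  exact mul_pos ha (sub_pos.mpr halow)

end Colony

theorem stmt_13_general (a b d β γ θ₀ α₁ : ℝ) (ha : 0 < a) (hd : 0 < d)
    (hβ : 0 < β) (hγ : 0 < γ) (hα₁ : α₁ ∈ Set.Ioo (0:ℝ) 1)
    (hθ₀lt : θ₀ < α₁ / (1 - α₁))
    (halow : 4 * b * d ^ 2 * β ^ 2 * (1 - α₁) ^ 2 /
      (α₁ ^ 4 * γ ^ 2 +
        4 * d * β ^ 2 * α₁ * γ * (1 - α₁) * (α₁ - (1 - α₁) * θ₀)) < a)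
    (hahigh : a < b * d * (1 - α₁) / (α₁ * γ * (α₁ - (1 - α₁) * θ₀))) :
    let Δ := a * (a * α₁ ^ 4 * γ ^ 2 -
      4 * d * β ^ 2 * ((1 - α₁) ^ 2 * (b * d + a * α₁ * γ * θ₀) -
        a * α₁ ^ 2 * γ * (1 - α₁)))
    let A₁ := (a * α₁ ^ 2 * γ - Real.sqrt Δ) / (2 * a * β * d * (1 - α₁))
    let A₂ := (a * α₁ ^ 2 * γ + Real.sqrt Δ) / (2 * a * β * d * (1 - α₁))
    0 < A₁ ∧ A₁ < A₂ ∧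
    (a * d * β * (1 - α₁) * A₁ ^ 2 - a * α₁ ^ 2 * γ * A₁ +
      β * ((1 - α₁) * (b * d + a * α₁ * γ * θ₀) - a * α₁ ^ 2 * γ) = 0) ∧
    (a * d * β * (1 - α₁) * A₂ ^ 2 - a * α₁ ^ 2 * γ * A₂ +
      β * ((1 - α₁) * (b * d + a * α₁ * γ * θ₀) - a * α₁ ^ 2 * γ) = 0) ∧
    ∀ A : ℝ,
      a * d * β * (1 - α₁) * A ^ 2 - a * α₁ ^ 2 * γ * A +
        β * ((1 - α₁) * (b * d + a * α₁ * γ * θ₀) - a * α₁ ^ 2 * γ) = 0 →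
      A = A₁ ∨ A = A₂ := by
  intro Δ A₁ A₂
  obtain ⟨hα₀, hα₁⟩ := hα₁
  have hgap := colony_threshold_gap_pos hα₁ hθ₀lt
  set p := a * d * β * (1 - α₁)
  set q := a * α₁ ^ 2 * γ
  set r := β * ((1 - α₁) * (b * d + a * α₁ * γ * θ₀) - a * α₁ ^ 2 * γ)
  have hp : 0 < p := mul_pos (by positivity) (sub_pos.mpr hα₁)
  have hr : 0 < r := mul_pos hβ (colony_constant_term_pos hγ hα₀ hgap hahigh)
  have hΔ : Δ = q ^ 2 - 4 * p * r := by simp only [Δ, p, q, r]; ring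
  have hD : 0 < q ^ 2 - 4 * p * r := hΔ ▸ colony_discrim_pos ha hd hγ hα₀ hα₁ hgap halow
  have hden : 2 * a * β * d * (1 - α₁) = 2 * p := by ring
  have hA₁ : A₁ = (q - √(q ^ 2 - 4 * p * r)) / (2 * p) := by rw [← hΔ, ← hden]
  have hA₂ : A₂ = (q + √(q ^ 2 - 4 * p * r)) / (2 * p) := by rw [← hΔ, ← hden]
  have hroots := quadratic_eq_zero_iff_of_discrim_nonneg hp.ne' hD.le
  obtain ⟨hA₁_pos, hA₁_lt_A₂⟩ := quadratic_roots_pos hp (by positivity) hr hD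
  rw [hA₁, hA₂]
  exact ⟨hA₁_pos, hA₁_lt_A₂, (hroots _).mpr (Or.inl rfl), (hroots _).mpr (Or.inr rfl),
    fun A ↦ (hroots A).mp⟩

/-- Case (4) of the Existence of Equilibria theorem: for
`â* < a < bd(1-α₁)/(α₁γ(α₁-(1-α₁)θ₀))` and `θ₀ < α₁/(1-α₁)` the equilibrium
quadratic has exactly two real roots `0 < A₁ < A₂`. -/
theorem stmt_13 (a b d β γ θ₀ α₁ : ℝ) (ha : 0 < a) (hb : 0 < b) (hd : 0 < d)
    (hβ : 0 < β) (hγ : 0 < γ) (hθ₀ : 0 < θ₀) (hα₁ : α₁ ∈ Set.Ioo (0:ℝ) 1)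
    (hθ₀lt : θ₀ < α₁ / (1 - α₁))
    (halow : 4 * b * d ^ 2 * β ^ 2 * (1 - α₁) ^ 2 /
      (α₁ ^ 4 * γ ^ 2 +
        4 * d * β ^ 2 * α₁ * γ * (1 - α₁) * (α₁ - (1 - α₁) * θ₀)) < a)
    (hahigh : a < b * d * (1 - α₁) / (α₁ * γ * (α₁ - (1 - α₁) * θ₀))) :
    let Δ := a * (a * α₁ ^ 4 * γ ^ 2 -
      4 * d * β ^ 2 * ((1 - α₁) ^ 2 * (b * d + a * α₁ * γ * θ₀) -
        a * α₁ ^ 2 * γ * (1 - α₁)))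
    let A₁ := (a * α₁ ^ 2 * γ - Real.sqrt Δ) / (2 * a * β * d * (1 - α₁))
    let A₂ := (a * α₁ ^ 2 * γ + Real.sqrt Δ) / (2 * a * β * d * (1 - α₁))
    0 < A₁ ∧ A₁ < A₂ ∧
    (a * d * β * (1 - α₁) * A₁ ^ 2 - a * α₁ ^ 2 * γ * A₁ +
      β * ((1 - α₁) * (b * d + a * α₁ * γ * θ₀) - a * α₁ ^ 2 * γ) = 0) ∧
    (a * d * β * (1 - α₁) * A₂ ^ 2 - a * α₁ ^ 2 * γ * A₂ +
      β * ((1 - α₁) * (b * d + a * α₁ * γ * θ₀) - a * α₁ ^ 2 * γ) = 0) ∧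
    ∀ A : ℝ,
      a * d * β * (1 - α₁) * A ^ 2 - a * α₁ ^ 2 * γ * A +
        β * ((1 - α₁) * (b * d + a * α₁ * γ * θ₀) - a * α₁ ^ 2 * γ) = 0 →
      A = A₁ ∨ A = A₂ :=
  stmt_13_general a b d β γ θ₀ α₁ ha hd hβ hγ hα₁ hθ₀lt halow hahigh
end

section
/- Let b, d, β, γ, θ₀ > 0 and α₁ ∈ (0,1) with θ₀ < α₁/(1−α₁). Then â* = 4bd²β²(1−α₁)² / (α₁⁴γ² + 4dβ²α₁γ(1−α₁)(α₁ − (1−α₁)θ₀)) satisfies 0 < â* < bd(1−α₁)/(α₁γ(α₁ − (1−α₁)θ₀)). -/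
/-- The saddle-node threshold `â*` is positive and strictly below the
persistence threshold `bd(1-α₁)/(α₁γ(α₁-(1-α₁)θ₀))`. -/
theorem stmt_14 (b d β γ θ₀ α₁ : ℝ) (hb : 0 < b) (hd : 0 < d) (hβ : 0 < β)
    (hγ : 0 < γ) (hθ₀ : 0 < θ₀) (hα₁ : α₁ ∈ Set.Ioo (0:ℝ) 1)
    (hθ₀lt : θ₀ < α₁ / (1 - α₁)) :
    0 < 4 * b * d ^ 2 * β ^ 2 * (1 - α₁) ^ 2 /
      (α₁ ^ 4 * γ ^ 2 +
        4 * d * β ^ 2 * α₁ * γ * (1 - α₁) * (α₁ - (1 - α₁) * θ₀)) ∧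
    4 * b * d ^ 2 * β ^ 2 * (1 - α₁) ^ 2 /
      (α₁ ^ 4 * γ ^ 2 +
        4 * d * β ^ 2 * α₁ * γ * (1 - α₁) * (α₁ - (1 - α₁) * θ₀)) <
      b * d * (1 - α₁) / (α₁ * γ * (α₁ - (1 - α₁) * θ₀)) := by
  obtain ⟨ha0, ha1⟩ := hα₁
  have h1 : (0:ℝ) < 1 - α₁ := by linarith
  have hs : 0 < α₁ - (1 - α₁) * θ₀ := by
    nlinarith [(lt_div_iff₀ h1).mp hθ₀lt]
  have hD : 0 < α₁ ^ 4 * γ ^ 2 +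
      4 * d * β ^ 2 * α₁ * γ * (1 - α₁) * (α₁ - (1 - α₁) * θ₀) := by
    positivity
  have hN : 0 < 4 * b * d ^ 2 * β ^ 2 * (1 - α₁) ^ 2 := by positivity
  have hR : 0 < α₁ * γ * (α₁ - (1 - α₁) * θ₀) := by positivity
  refine ⟨div_pos hN hD, ?_⟩
  rw [div_lt_div_iff₀ hD hR]
  nlinarith [mul_pos (mul_pos (mul_pos hb hd) h1) (mul_pos (pow_pos ha0 4) (pow_pos hγ 2))]
end
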